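/- Let G be an ordered graph. If all coefficients of L̄_G(q) (as a polynomial in q whose coefficients are formal power series in x_1,x_2,…) are symmetric, then W_G is symmetric and every independent set of vertices of G has size at most |max G|. -/

import Mathlib

/-!
STATEMENT 15: For an ordered graph `G`, if all the `q`-coefficients of `L̄_G(q)` are
symmetric power series, then `W_G` is symmetric and every independent set of vertices
of `G` has size at most `|max G|`.
-/

open scoped Classical
noncomputable section

/-- `m` is the monomial `x^κ` of the set-valued coloring `κ`. -/
def MonoMatch {W : Type*} (κ : W → Finset ℕ+) (m : ℕ+ →₀ ℕ) : Prop :=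
  ∀ i : ℕ+, m i = Nat.card {w : W // i ∈ κ w}

/-- A proper set-valued coloring. -/
def IsProperSV {V : Type*} (G : SimpleGraph V) (κ : V → Finset ℕ+) : Prop :=
  (∀ v, (κ v).Nonempty) ∧ ∀ ⦃u v⦄, G.Adj u v → Disjoint (κ u) (κ v)

/-- Number of ascents of `f : V → ℙ`. -/
def ascNum {V : Type*} [Preorder V] (G : SimpleGraph V) (f : V → ℕ+) : ℕ :=
  Nat.card {p : V × V // G.Adj p.1 p.2 ∧ p.1 < p.2 ∧ f p.1 < f p.2}

/-- Maximum of a finite set of positive integers (junk value `1` on `∅`). -/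
def maxColor (s : Finset ℕ+) : ℕ+ := WithBot.unbotD 1 s.max

/-- The kromatic quasisymmetric function `L̄_G(q)`, coefficientwise. -/
def kqL {V : Type*} [Preorder V] (G : SimpleGraph V) :
    MvPowerSeries ℕ+ (Polynomial ℤ) :=
  fun m => ∑ᶠ κ : {κ : V → Finset ℕ+ // IsProperSV G κ ∧ MonoMatch κ m},
    (Polynomial.X : Polynomial ℤ) ^ ascNum G (fun v => maxColor (κ.1 v))

/-- `W_G := Σ_κ x^κ` over ascent-free proper colorings, coefficientwise. -/
def WG {V : Type*} [Preorder V] (G : SimpleGraph V) : MvPowerSeries ℕ+ ℤ :=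
  fun m => (Nat.card {κ : V → ℕ+ //
    (∀ ⦃u v⦄, G.Adj u v → κ u ≠ κ v) ∧
    (∀ ⦃u v⦄, G.Adj u v → u < v → ¬ κ u < κ v) ∧
    (∀ i : ℕ+, m i = Nat.card {v : V // κ v = i})} : ℤ)

/-- The action of a permutation of the variables on a power series. -/
def permutePS {R : Type*} [Semiring R] (e : Equiv.Perm ℕ+) (f : MvPowerSeries ℕ+ R) :
    MvPowerSeries ℕ+ R :=
  fun m => MvPowerSeries.coeff (R := R) (Finsupp.equivMapDomain e.symm m) f

/-- Symmetry of a power series. -/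
def IsSymmetricPS {R : Type*} [Semiring R] (f : MvPowerSeries ℕ+ R) : Prop :=
  ∀ e : Equiv.Perm ℕ+, {i | e i ≠ i}.Finite → permutePS e f = f

/-! ### Auxiliary lemmas -/

lemma maxColor_singleton (a : ℕ+) : maxColor {a} = a := by
  simp [maxColor, Finset.max_singleton]

lemma maxColor_pair (a : ℕ+) : maxColor {1, a} = a := by
  simp [maxColor, Finset.max_insert, Finset.max_singleton, max_eq_right a.one_le]

lemma le_maxColor {s : Finset ℕ+} {a : ℕ+} (ha : a ∈ s) : a ≤ maxColor s := by
  obtain ⟨b, hb⟩ := Finset.max_of_mem ha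
  have := Finset.le_max ha
  rw [hb] at this
  simpa [maxColor, hb] using this

lemma maxColor_le {s : Finset ℕ+} {N : ℕ+} (hs : s.Nonempty) (h : ∀ a ∈ s, a ≤ N) :
    maxColor s ≤ N := by
  obtain ⟨b, hb⟩ := Finset.max_of_mem hs.choose_spec
  have hbs : b ∈ s := Finset.mem_of_max hb
  simpa [maxColor, hb] using h b hbs

section Helpers
set_option linter.unusedSectionVars false
variable {V : Type*} [Fintype V] [LinearOrder V] {G : SimpleGraph V}

lemma monoMatch_card {κ : V → Finset ℕ+} {m : ℕ+ →₀ ℕ} (h : MonoMatch κ m) (i : ℕ+) :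
    m i = (Finset.univ.filter (fun w => i ∈ κ w)).card := by
  rw [h i, Nat.card_eq_fintype_card, Fintype.card_subtype]

lemma mem_support_of_mem {κ : V → Finset ℕ+} {m : ℕ+ →₀ ℕ} (h : MonoMatch κ m)
    {i : ℕ+} {v : V} (hi : i ∈ κ v) : m i ≠ 0 := by
  rw [monoMatch_card h i]
  exact Finset.card_ne_zero_of_mem (by simp [hi] : v ∈ Finset.univ.filter (fun w => i ∈ κ w))

lemma ascNum_zero {g : V → ℕ+} (h : ascNum G g = 0) {u v : V}
    (ha : G.Adj u v) (hlt : u < v) : ¬ g u < g v := by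
  intro hg
  have : Nonempty {p : V × V // G.Adj p.1 p.2 ∧ p.1 < p.2 ∧ g p.1 < g p.2} :=
    ⟨⟨(u, v), ha, hlt, hg⟩⟩
  rw [ascNum, Nat.card_eq_fintype_card] at h
  exact Fintype.card_ne_zero h

lemma finite_T (G : SimpleGraph V) (m : ℕ+ →₀ ℕ) :
    Finite {κ : V → Finset ℕ+ // IsProperSV G κ ∧ MonoMatch κ m} := by
  have : Finite {s : Finset ℕ+ // s ⊆ m.support} := by infer_instance
  apply Finite.of_injective
    (fun κ : {κ : V → Finset ℕ+ // IsProperSV G κ ∧ MonoMatch κ m} =>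
      (fun v => (⟨κ.1 v, by
        intro i hi
        simpa [Finsupp.mem_support_iff] using mem_support_of_mem κ.2.2 hi⟩ :
          {s : Finset ℕ+ // s ⊆ m.support})))
  intro a b hab
  apply Subtype.ext
  funext v
  have := congrFun hab v
  simpa [Subtype.ext_iff] using this

/-- The `d`-th `q`-coefficient of a coefficient of `L̄_G` counts proper set-valued
colorings with monomial `m` and exactly `d` ascents. -/
lemma coeff_kqL (G : SimpleGraph V) (m : ℕ+ →₀ ℕ) (d : ℕ) :
    (MvPowerSeries.coeff (R := Polynomial ℤ) m (kqL G)).coeff d =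
      (Nat.card {κ : V → Finset ℕ+ // (IsProperSV G κ ∧ MonoMatch κ m) ∧
        ascNum G (fun v => maxColor (κ v)) = d} : ℤ) := by
  have hfin := finite_T G m
  letI : Fintype {κ : V → Finset ℕ+ // IsProperSV G κ ∧ MonoMatch κ m} := Fintype.ofFinite _
  have h1 : MvPowerSeries.coeff (R := Polynomial ℤ) m (kqL G) =
      ∑ κ : {κ : V → Finset ℕ+ // IsProperSV G κ ∧ MonoMatch κ m},
        (Polynomial.X : Polynomial ℤ) ^ ascNum G (fun v => maxColor (κ.1 v)) := by
    show kqL G m = _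
    rw [kqL, finsum_eq_sum_of_fintype]
  rw [h1, Polynomial.finset_sum_coeff]
  simp only [Polynomial.coeff_X_pow]
  rw [Finset.sum_boole]
  have h2 : Nat.card {κ : V → Finset ℕ+ // (IsProperSV G κ ∧ MonoMatch κ m) ∧
        ascNum G (fun v => maxColor (κ v)) = d} =
      Nat.card {κ : {κ : V → Finset ℕ+ // IsProperSV G κ ∧ MonoMatch κ m} //
        ascNum G (fun v => maxColor (κ.1 v)) = d} :=
    (Nat.card_congr (Equiv.subtypeSubtypeEquivSubtypeInter _ _)).symm
  rw [h2, Nat.card_eq_fintype_card, Fintype.card_subtype]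
  norm_cast
  congr 1
  apply Finset.filter_congr
  intro x _
  simp [eq_comm]

lemma finite_coeff_type (G : SimpleGraph V) (m : ℕ+ →₀ ℕ) (d : ℕ) :
    Finite {κ : V → Finset ℕ+ // (IsProperSV G κ ∧ MonoMatch κ m) ∧
        ascNum G (fun v => maxColor (κ v)) = d} := by
  have := finite_T G m
  apply Finite.of_injective
    (fun κ : {κ : V → Finset ℕ+ // (IsProperSV G κ ∧ MonoMatch κ m) ∧
        ascNum G (fun v => maxColor (κ v)) = d} =>
      (⟨κ.1, κ.2.1⟩ : {κ : V → Finset ℕ+ // IsProperSV G κ ∧ MonoMatch κ m}))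
  intro a b hab
  exact Subtype.ext (by simpa [Subtype.ext_iff] using hab)

lemma sum_m_eq {κ : V → Finset ℕ+} {m : ℕ+ →₀ ℕ} (h : MonoMatch κ m) :
    m.sum (fun _ k => k) = ∑ v : V, (κ v).card := by
  rw [Finsupp.sum]
  have h1 : ∀ i ∈ m.support, m i = ∑ v : V, if i ∈ κ v then 1 else 0 := by
    intro i _
    rw [monoMatch_card h i, Finset.sum_boole]
    norm_cast
  rw [Finset.sum_congr rfl h1, Finset.sum_comm]
  apply Finset.sum_congr rfl
  intro v _
  have : (m.support.filter (fun i => i ∈ κ v)) = κ v := by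
    rw [Finset.filter_mem_eq_inter, Finset.inter_eq_right]
    intro i hi
    simpa [Finsupp.mem_support_iff] using mem_support_of_mem h hi
  calc (∑ x ∈ m.support, if x ∈ κ v then 1 else 0)
      = ((m.support.filter (fun i => i ∈ κ v)).card : ℕ) := (Finset.card_filter _ _).symm
    _ = (κ v).card := by rw [this]

lemma singletons {κ : V → Finset ℕ+} {m : ℕ+ →₀ ℕ} (hne : ∀ v, (κ v).Nonempty)
    (h : MonoMatch κ m) (hm : m.sum (fun _ k => k) = Fintype.card V) (v : V) :
    ∃ a, κ v = {a} := by
  rw [← Finset.card_eq_one]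
  have hs := sum_m_eq h
  rw [hm] at hs
  have h1 : ∀ w ∈ Finset.univ, 1 ≤ (κ w).card := fun w _ => (hne w).card_pos
  have := (Finset.sum_eq_sum_iff_of_le h1).1 (by
    simpa [Finset.card_univ] using hs)
  exact ((this v (Finset.mem_univ v))).symm

lemma sum_m_eq_card {f : V → ℕ+} {m : ℕ+ →₀ ℕ}
    (h3 : ∀ i : ℕ+, m i = Nat.card {v : V // f v = i}) :
    m.sum (fun _ k => k) = Fintype.card V := by
  have hm : ∀ i, m i = (Finset.univ.filter (fun v => f v = i)).card := by
    intro i; rw [h3 i, Nat.card_eq_fintype_card, Fintype.card_subtype]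
  have H : ∀ v ∈ (Finset.univ : Finset V), f v ∈ m.support := by
    intro v _
    rw [Finsupp.mem_support_iff, hm (f v)]
    exact Finset.card_ne_zero_of_mem (by simp : v ∈ Finset.univ.filter (fun w => f w = f v))
  rw [Finsupp.sum, Finset.sum_congr rfl (fun i _ => hm i), ← Finset.card_univ,
    Finset.card_eq_sum_card_fiberwise H]

/-- For monomials of total degree `|V|`, the colorings counted by `W_G` biject with
proper set-valued colorings with no ascents. -/
lemma card_B_eq_A (G : SimpleGraph V) {m : ℕ+ →₀ ℕ}
    (hm : m.sum (fun _ k => k) = Fintype.card V) :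
    Nat.card {κ : V → ℕ+ //
      (∀ ⦃u v⦄, G.Adj u v → κ u ≠ κ v) ∧
      (∀ ⦃u v⦄, G.Adj u v → u < v → ¬ κ u < κ v) ∧
      (∀ i : ℕ+, m i = Nat.card {v : V // κ v = i})} =
    Nat.card {κ : V → Finset ℕ+ // (IsProperSV G κ ∧ MonoMatch κ m) ∧
        ascNum G (fun v => maxColor (κ v)) = 0} := by
  apply Nat.card_congr
  refine Equiv.ofBijective
    (fun f => ⟨fun v => {f.1 v}, ⟨⟨fun v => ⟨f.1 v, by simp⟩, ?_⟩, ?_⟩, ?_⟩) ⟨?_, ?_⟩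
  · intro u v huv
    simp only [Finset.disjoint_singleton]
    exact f.2.1 huv
  · intro i
    rw [f.2.2.2 i]
    exact Nat.card_congr (Equiv.subtypeEquivRight (by intro v; simp [eq_comm]))
  · rw [ascNum, Nat.card_eq_zero]
    left
    rw [isEmpty_subtype]
    rintro ⟨u, v⟩ ⟨ha, hlt, hcol⟩
    simp only [maxColor_singleton] at hcol
    exact f.2.2.1 ha hlt hcol
  · intro a b hab
    apply Subtype.ext
    funext v
    have := congrFun (congrArg Subtype.val hab) v
    simpa using this
  · rintro ⟨κ, ⟨⟨hne, hdisj⟩, hmm⟩, hasc⟩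
    have hsing := singletons hne hmm hm
    choose a ha using hsing
    have hmax : ∀ v, maxColor (κ v) = a v := by
      intro v; rw [ha v, maxColor_singleton]
    refine ⟨⟨a, ?_, ?_, ?_⟩, ?_⟩
    · intro u v huv heq
      have := Finset.disjoint_left.1 (hdisj huv)
      rw [ha u, ha v] at this
      exact this (Finset.mem_singleton_self _) (by simp [heq])
    · intro u v huv hlt hcol
      have := ascNum_zero hasc huv hlt
      rw [hmax u, hmax v] at this
      exact this hcol
    · intro i
      rw [hmm i]
      apply Nat.card_congr (Equiv.subtypeEquivRight _)
      intro v
      rw [ha v]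
      simp [eq_comm]
    · apply Subtype.ext
      funext v
      simp only
      rw [ha v]

/-- `W_G` as (a degree cutoff of) the `q^0` coefficient of `L̄_G`. -/
lemma WG_eq (G : SimpleGraph V) (m : ℕ+ →₀ ℕ) :
    WG G m = if m.sum (fun _ k => k) = Fintype.card V
      then (MvPowerSeries.coeff (R := Polynomial ℤ) m (kqL G)).coeff 0 else 0 := by
  by_cases hm : m.sum (fun _ k => k) = Fintype.card V
  · rw [if_pos hm, coeff_kqL, WG]
    exact_mod_cast congrArg (Nat.cast : ℕ → ℤ) (card_B_eq_A G hm)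
  · rw [if_neg hm, WG]
    norm_cast
    rw [Nat.card_eq_zero]
    left
    rw [isEmpty_subtype]
    rintro f ⟨_, _, h3⟩
    exact hm (sum_m_eq_card h3)

end Helpers


/-- If all `q`-coefficients of `L̄_G(q)` are symmetric then `W_G` is
symmetric and independent sets have size at most `|max G|`. -/
theorem symmetric_kqL_imp {V : Type*} [Fintype V] [LinearOrder V] (G : SimpleGraph V)
    (h : ∀ d : ℕ, IsSymmetricPS
      (fun m => (MvPowerSeries.coeff (R := Polynomial ℤ) m (kqL G)).coeff d :
        MvPowerSeries ℕ+ ℤ)) :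
    IsSymmetricPS (WG G) ∧
      ∀ I : Finset V, (∀ u ∈ I, ∀ v ∈ I, ¬ G.Adj u v) →
        I.card ≤ Nat.card {v : V // ∀ u, G.Adj u v → u < v} := by
  constructor
  · -- Part 1: symmetry of W_G
    intro e he
    funext m
    show WG G (Finsupp.equivMapDomain e.symm m) = WG G m
    rw [WG_eq, WG_eq]
    have hsum : (Finsupp.equivMapDomain e.symm m).sum (fun _ k => k)
        = m.sum (fun _ k => k) := Finsupp.sum_equivMapDomain e.symm m _
    rw [hsum]
    split_ifs with hm
    · exact congrFun (h 0 e he) m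
    · rfl
  · -- Part 2: independent sets are at most as big as max G
    intro I hI
    set n := Fintype.card V with hn
    let φ : Fin n ≃o V := Fintype.orderIsoFinOfCardEq V rfl
    let c : V → ℕ+ := fun v => ⟨(φ.symm v : ℕ) + 2, by omega⟩
    let N : ℕ+ := ⟨n + 3, by omega⟩
    have hc_lt_N : ∀ v, c v < N := by
      intro v
      have : (φ.symm v : ℕ) < n := (φ.symm v).isLt
      show ((φ.symm v : ℕ) + 2 : ℕ) < (n + 3 : ℕ)
      omega
    have hc_one : ∀ v, (1 : ℕ+) < c v := by
      intro v
      show (1 : ℕ) < (φ.symm v : ℕ) + 2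
      omega
    have hc_mono : StrictMono c := by
      intro u v huv
      have : φ.symm u < φ.symm v := φ.symm.strictMono huv
      show ((φ.symm u : ℕ) + 2 : ℕ) < ((φ.symm v : ℕ) + 2 : ℕ)
      have := Fin.lt_iff_val_lt_val.1 this
      omega
    have h1N : (1 : ℕ+) < N := by
      show (1 : ℕ) < n + 3
      omega
    classical
    let κ0 : V → Finset ℕ+ := fun v => if v ∈ I then {1, c v} else {c v}
    have mem_κ0 : ∀ {i : ℕ+} {v : V}, i ∈ κ0 v ↔ (i = c v ∨ (v ∈ I ∧ i = 1)) := by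
      intro i v
      by_cases hv : v ∈ I <;> simp [κ0, hv] <;> tauto
    have hmax0 : ∀ v, maxColor (κ0 v) = c v := by
      intro v
      by_cases hv : v ∈ I
      · rw [show κ0 v = {1, c v} from if_pos hv]
        exact maxColor_pair (c v)
      · rw [show κ0 v = {c v} from if_neg hv, maxColor_singleton]
    have hproper : IsProperSV G κ0 := by
      constructor
      · intro v
        exact ⟨c v, mem_κ0.2 (Or.inl rfl)⟩
      · intro u v huv
        rw [Finset.disjoint_left]
        intro i hiu hiv
        rcases mem_κ0.1 hiu with hu1 | ⟨huI, hu1⟩ <;>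
          rcases mem_κ0.1 hiv with hv1 | ⟨hvI, hv1⟩
        · exact huv.ne (hc_mono.injective (hu1 ▸ hv1))
        · exact absurd (hu1 ▸ hv1 : c u = 1) (ne_of_gt (hc_one u))
        · exact absurd (hv1 ▸ hu1 : c v = 1) (ne_of_gt (hc_one v))
        · exact hI u huI v hvI huv
    -- the monomial of κ0
    have hfin0 : (Function.support (fun i => (Nat.card {w : V // i ∈ κ0 w} : ℕ))).Finite := by
      apply Set.Finite.subset (Finset.univ.biUnion κ0).finite_toSet
      intro i hi
      have : Nonempty {w : V // i ∈ κ0 w} := (Nat.card_ne_zero.1 hi).1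
      obtain ⟨w, hw⟩ := this
      simp only [Finset.coe_biUnion, Set.mem_iUnion]
      exact ⟨w, by simp, hw⟩
    let m0 : ℕ+ →₀ ℕ := Finsupp.ofSupportFinite _ hfin0
    have hm0 : ∀ i, m0 i = Nat.card {w : V // i ∈ κ0 w} := fun i => rfl
    have hmm0 : MonoMatch κ0 m0 := fun i => hm0 i
    set D := ascNum G (fun v => maxColor (κ0 v)) with hD
    -- coefficient at m0 is nonzero
    have h0ne : (MvPowerSeries.coeff (R := Polynomial ℤ) m0 (kqL G)).coeff D ≠ 0 := by
      rw [coeff_kqL]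
      have hfin := finite_coeff_type G m0 D
      have hne : Nonempty {κ : V → Finset ℕ+ // (IsProperSV G κ ∧ MonoMatch κ m0) ∧
          ascNum G (fun v => maxColor (κ v)) = D} := ⟨⟨κ0, ⟨hproper, hmm0⟩, rfl⟩⟩
      exact_mod_cast Nat.card_ne_zero.2 ⟨hne, hfin⟩
    -- swap colors 1 and N
    let e : Equiv.Perm ℕ+ := Equiv.swap 1 N
    have he : {i | e i ≠ i}.Finite := by
      apply Set.Finite.subset ((Set.finite_singleton N).insert 1)
      intro i hi
      simp only [Set.mem_setOf_eq] at hi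
      by_contra hmem
      simp only [Set.mem_insert_iff, Set.mem_singleton_iff, not_or] at hmem
      exact hi (Equiv.swap_apply_of_ne_of_ne hmem.1 hmem.2)
    let m1 : ℕ+ →₀ ℕ := Finsupp.equivMapDomain e.symm m0
    have hm1 : ∀ i, m1 i = m0 (e i) := by
      intro i
      show (Finsupp.equivMapDomain e.symm m0) i = m0 (e i)
      rw [Finsupp.equivMapDomain_apply, Equiv.symm_symm]
    have h1ne : (MvPowerSeries.coeff (R := Polynomial ℤ) m1 (kqL G)).coeff D ≠ 0 := by
      have h2 : (MvPowerSeries.coeff (R := Polynomial ℤ) m1 (kqL G)).coeff D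
          = (MvPowerSeries.coeff (R := Polynomial ℤ) m0 (kqL G)).coeff D :=
        congrFun (h D e he) m0
      rw [h2]
      exact h0ne
    rw [coeff_kqL] at h1ne
    have h1ne' : Nat.card {κ : V → Finset ℕ+ // (IsProperSV G κ ∧ MonoMatch κ m1) ∧
        ascNum G (fun v => maxColor (κ v)) = D} ≠ 0 := by exact_mod_cast h1ne
    obtain ⟨⟨κ1, ⟨⟨hne1, hdisj1⟩, hmm1⟩, hasc1⟩⟩ := (Nat.card_ne_zero.1 h1ne').1
    -- all colors used by κ1 are at most N
    have hbound : ∀ i (v : V), i ∈ κ1 v → i ≤ N := by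
      intro i v hi
      have hi' : m1 i ≠ 0 := mem_support_of_mem hmm1 hi
      rw [hm1] at hi'
      rw [hm0] at hi'
      obtain ⟨w, hw⟩ := (Nat.card_ne_zero.1 hi').1
      have heiN : e i ≤ N := by
        rcases mem_κ0.1 hw with h1 | ⟨_, h1⟩
        · exact h1 ▸ (hc_lt_N w).le
        · exact h1 ▸ h1N.le
      by_cases hi1 : i = 1
      · exact hi1 ▸ h1N.le
      by_cases hiN : i = N
      · exact hiN ▸ le_refl N
      · rwa [show e i = i from Equiv.swap_apply_of_ne_of_ne hi1 hiN] at heiN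
    -- κ1 has every possible ascent
    have hallasc : ∀ u v : V, G.Adj u v → u < v →
        maxColor (κ1 u) < maxColor (κ1 v) := by
      have hD' : D = Nat.card {p : V × V // G.Adj p.1 p.2 ∧ p.1 < p.2} := by
        rw [hD, ascNum]
        apply Nat.card_congr (Equiv.subtypeEquivRight _)
        rintro ⟨u, v⟩
        constructor
        · rintro ⟨ha, hlt, _⟩; exact ⟨ha, hlt⟩
        · rintro ⟨ha, hlt⟩
          refine ⟨ha, hlt, ?_⟩
          rw [hmax0, hmax0]
          exact hc_mono hlt
      set f1 : V → ℕ+ := fun v => maxColor (κ1 v) with hf1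
      have hsub : {p : V × V | G.Adj p.1 p.2 ∧ p.1 < p.2 ∧ f1 p.1 < f1 p.2} ⊆
          {p : V × V | G.Adj p.1 p.2 ∧ p.1 < p.2} := by
        rintro p ⟨ha, hlt, _⟩; exact ⟨ha, hlt⟩
      have hcards : ({p : V × V | G.Adj p.1 p.2 ∧ p.1 < p.2} : Set (V × V)).ncard ≤
          ({p : V × V | G.Adj p.1 p.2 ∧ p.1 < p.2 ∧ f1 p.1 < f1 p.2} : Set (V × V)).ncard := by
        rw [← Nat.card_coe_set_eq, ← Nat.card_coe_set_eq]
        have e1 : Nat.card ({p : V × V | G.Adj p.1 p.2 ∧ p.1 < p.2 ∧ f1 p.1 < f1 p.2} : Set (V × V)) = D := hasc1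
        rw [e1, hD']
        rfl
      have heq := Set.eq_of_subset_of_ncard_le hsub hcards (Set.toFinite _)
      intro u v ha hlt
      have : (u, v) ∈ {p : V × V | G.Adj p.1 p.2 ∧ p.1 < p.2 ∧ f1 p.1 < f1 p.2} := by
        rw [heq]; exact ⟨ha, hlt⟩
      exact this.2.2
    -- vertices containing N are in max G
    have hS : ∀ v : V, N ∈ κ1 v → ∀ u, G.Adj u v → u < v := by
      intro v hNv u hadj
      by_contra hnlt
      have hvu : v < u := lt_of_le_of_ne (le_of_not_gt hnlt) hadj.ne'
      have h1 : maxColor (κ1 v) < maxColor (κ1 u) := hallasc v u hadj.symm hvu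
      have h2 : N ≤ maxColor (κ1 v) := le_maxColor hNv
      have h3 : maxColor (κ1 u) ≤ N := maxColor_le (hne1 u) (fun a ha => hbound a u ha)
      exact absurd (lt_of_le_of_lt h2 (lt_of_lt_of_le h1 h3)) (lt_irrefl N)
    -- count: |I| = m1 N = #{v | N ∈ κ1 v}
    have hIcard : m1 N = I.card := by
      rw [hm1, show e N = 1 from Equiv.swap_apply_right 1 N, hm0]
      have : ∀ w : V, (1 : ℕ+) ∈ κ0 w ↔ w ∈ I := by
        intro w
        rw [mem_κ0]
        constructor
        · rintro (h1 | ⟨hw, _⟩)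
          · exact absurd h1.symm (ne_of_gt (hc_one w))
          · exact hw
        · intro hw; exact Or.inr ⟨hw, rfl⟩
      rw [Nat.card_congr (Equiv.subtypeEquivRight this)]
      exact Nat.card_eq_finsetCard I
    have hScard : Nat.card {w : V // N ∈ κ1 w} = I.card :=
      (hmm1 N).symm.trans hIcard
    rw [← hScard]
    exact Nat.card_le_card_of_injective
      (fun w => ⟨w.1, fun u hu => hS w.1 w.2 u hu⟩)
      (fun a b hab => Subtype.ext (by simpa [Subtype.ext_iff] using hab))
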